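/- Let t0 ≤ t1 < t2 ≤ T and ξ > 0. If (x̃^ξ, ũ^ξ) and (x̌^ξ, ǔ^ξ) are feasible processes for (FP3) with x̃^ξ(t) = ξ for all t ∈ [t1,t2], and x̌^ξ(t) = ξ − a(t − t1) for t ∈ [t1, ť] and x̌^ξ(t) = ξ + a(t − t2) for t ∈ (ť, t2], where ť := (t1+t2)/2, then J(x̌^ξ, ǔ^ξ)|_{[t1,t2]} − J(x̃^ξ, ũ^ξ)|_{[t1,t2]} = (1/λ)(a/λ − 1)·Δ(t1,t2), and the strict inequality J(x̌^ξ, ǔ^ξ)|_{[t1,t2]} > J(x̃^ξ, ũ^ξ)|_{[t1,t2]} holds. -/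

import Mathlib

/-!
Integrating `e^{-λt} u` by parts against `ẋ = -a u` expresses the restricted cost through the
state alone: `J|[t1,t2] = (λ/a - 1) ∫ e^{-λt} x dt - (e^{-λ t1} x(t1) - e^{-λ t2} x(t2)) / a`.
Both processes take the value `ξ` at `t1` and `t2`, and on `[t1,t2]` the valley trajectory lies
below the constant one by the tent `a · min (t - t1) (t2 - t)`, whose integral against `e^{-λt}`
is `Δ(t1,t2) / λ²`. Finally `Δ(t1,t2) = (e^{-λ t1 / 2} - e^{-λ t2 / 2})² > 0` and `a > λ`.
-/

open MeasureTheory Set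

noncomputable section

/-- A feasible process for problem (FP3): `x` is the (absolutely continuous) state
trajectory, represented as the indefinite integral of its a.e. derivative `-a*u`,
`u` is a measurable control with values in `[-1,1]` a.e., the initial condition is
`x t0 = x0`, and the bilateral state constraint `-1 ≤ x t ≤ 1` holds on `[t0,T]`. -/
def FP3Feasible (a t0 T x0 : ℝ) (x u : ℝ → ℝ) : Prop :=
  AEStronglyMeasurable u (volume.restrict (Icc t0 T)) ∧
  (∀ᵐ t ∂(volume.restrict (Icc t0 T)), u t ∈ Icc (-1 : ℝ) 1) ∧
  (∀ t ∈ Icc t0 T, x t = x0 + ∫ s in t0..t, -(a * u s)) ∧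
  (∀ t ∈ Icc t0 T, x t ∈ Icc (-1 : ℝ) 1)

/-- The cost functional of (FP3) on the interval `[t1,t2]`. -/
def FP3Cost (lam t1 t2 : ℝ) (x u : ℝ → ℝ) : ℝ :=
  ∫ t in t1..t2, -(Real.exp (-(lam * t)) * (x t + u t))

/-- `(x,u)` is a `W^{1,1}` local minimizer of (FP3). -/
def FP3LocalMin (a lam t0 T x0 : ℝ) (x u : ℝ → ℝ) : Prop :=
  FP3Feasible a t0 T x0 x u ∧
  ∃ δ > (0 : ℝ), ∀ y v, FP3Feasible a t0 T x0 y v →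
    (∫ t in t0..T, |(-(a * v t)) - (-(a * u t))|) ≤ δ →
    FP3Cost lam t0 T x u ≤ FP3Cost lam t0 T y v

/-- `(x,u)` is a `W^{1,1}` global minimizer of (FP3). -/
def FP3GlobalMin (a lam t0 T x0 : ℝ) (x u : ℝ → ℝ) : Prop :=
  FP3Feasible a t0 T x0 x u ∧
  ∀ y v, FP3Feasible a t0 T x0 y v → FP3Cost lam t0 T x u ≤ FP3Cost lam t0 T y v

/-- The function `Δ(t1,t2) = e^{-λ t1} - 2 e^{-λ (t1+t2)/2} + e^{-λ t2}`. -/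
def FP3Delta (lam t1 t2 : ℝ) : ℝ :=
  Real.exp (-(lam * t1)) - 2 * Real.exp (-(lam * (t1 + t2) / 2)) + Real.exp (-(lam * t2))

/-- The characteristic constant `ρ = (1/λ) ln (a/(a-λ))` of (FP3). -/
def FP3rho (a lam : ℝ) : ℝ := (1 / lam) * Real.log (a / (a - lam))

theorem integral_mul_eq_sub_integral_deriv_mul_of_eq_primitive {g v x : ℝ → ℝ} {t1 t2 : ℝ}
    (hg : ContDiff ℝ 1 g) (hv : IntervalIntegrable v volume t1 t2)
    (hx : ∀ t ∈ uIcc t1 t2, x t = x t1 + ∫ s in t1..t, v s) :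
    ∫ t in t1..t2, g t * v t = g t2 * x t2 - g t1 * x t1 - ∫ t in t1..t2, deriv g t * x t := by
  set X : ℝ → ℝ := fun t => x t1 + ∫ s in t1..t, v s
  have hXac : AbsolutelyContinuousOnInterval X t1 t2 :=
    contDiffOn_const.absolutelyContinuousOnInterval.add
      (hv.absolutelyContinuousOnInterval_intervalIntegral left_mem_uIcc)
  have hderiv : ∀ᵐ t, t ∈ uIoc t1 t2 → g t * v t = g t * deriv X t := by
    filter_upwards [hv.ae_hasDerivAt_integral] with t ht ht'
    rw [((ht (uIoc_subset_uIcc ht') t1 left_mem_uIcc).const_add (x t1)).deriv]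
  have hXx : EqOn X x (uIcc t1 t2) := fun t ht => (hx t ht).symm
  rw [intervalIntegral.integral_congr_ae hderiv,
    hg.contDiffOn.absolutelyContinuousOnInterval.integral_mul_deriv_eq_deriv_mul hXac,
    hXx left_mem_uIcc, hXx right_mem_uIcc,
    intervalIntegral.integral_congr (g := fun t => deriv g t * x t) fun t ht => by rw [hXx ht]]

theorem integral_exp_mul_sub {lam : ℝ} (hlam : lam ≠ 0) (c p q : ℝ) :
    ∫ t in p..q, Real.exp (-(lam * t)) * (t - c)
      = (Real.exp (-(lam * p)) * (lam * (p - c) + 1)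
        - Real.exp (-(lam * q)) * (lam * (q - c) + 1)) / lam ^ 2 := by
  have hF : ∀ t, HasDerivAt (fun t => -(Real.exp (-(lam * t)) * (lam * (t - c) + 1)) / lam ^ 2)
      (Real.exp (-(lam * t)) * (t - c)) t := fun t => by
    have hE : HasDerivAt (fun t => Real.exp (-(lam * t))) (Real.exp (-(lam * t)) * -(lam * 1)) t :=
      ((hasDerivAt_id' t).const_mul lam).neg.exp
    have hA : HasDerivAt (fun t => lam * (t - c) + 1) (lam * 1) t :=
      (((hasDerivAt_id' t).sub_const c).const_mul lam).add_const 1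
    refine ((hE.mul hA).neg.div_const (lam ^ 2)).congr_deriv ?_
    field_simp
    ring
  rw [intervalIntegral.integral_eq_sub_of_hasDerivAt (fun t _ => hF t)
    (Continuous.intervalIntegrable (by fun_prop) _ _)]
  ring

theorem integral_exp_mul_min_sub {lam p q : ℝ} (hlam : lam ≠ 0) (hpq : p ≤ q) :
    ∫ t in p..q, Real.exp (-(lam * t)) * min (t - p) (q - t) = FP3Delta lam p q / lam ^ 2 := by
  set m := (p + q) / 2 with hm
  have hint : ∀ r s, IntervalIntegrable (fun t => Real.exp (-(lam * t)) * min (t - p) (q - t))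
      volume r s := fun r s => Continuous.intervalIntegrable (by fun_prop) r s
  have hleft : ∫ t in p..m, Real.exp (-(lam * t)) * min (t - p) (q - t)
      = ∫ t in p..m, Real.exp (-(lam * t)) * (t - p) :=
    intervalIntegral.integral_congr fun t ht => by
      rw [uIcc_of_le (by linarith)] at ht
      rw [min_eq_left (by linarith [ht.2])]
  have hright : ∫ t in m..q, Real.exp (-(lam * t)) * min (t - p) (q - t)
      = -∫ t in m..q, Real.exp (-(lam * t)) * (t - q) := by
    rw [← intervalIntegral.integral_neg]
    refine intervalIntegral.integral_congr fun t ht => ?_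
    rw [uIcc_of_le (by linarith)] at ht
    rw [min_eq_right (by linarith [ht.1])]
    ring
  rw [← intervalIntegral.integral_add_adjacent_intervals (hint p m) (hint m q), hleft, hright,
    integral_exp_mul_sub hlam, integral_exp_mul_sub hlam, FP3Delta,
    show -(lam * (p + q) / 2) = -(lam * m) by ring]
  field_simp
  ring

theorem FP3Delta_eq_sq (lam p q : ℝ) :
    FP3Delta lam p q = (Real.exp (-(lam * p) / 2) - Real.exp (-(lam * q) / 2)) ^ 2 := by
  rw [FP3Delta, sub_sq, ← Real.exp_nat_mul, ← Real.exp_nat_mul, mul_assoc, ← Real.exp_add]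
  ring_nf

theorem FP3Delta_pos {lam p q : ℝ} (hlam : lam ≠ 0) (hpq : p ≠ q) : 0 < FP3Delta lam p q := by
  rw [FP3Delta_eq_sq]
  refine pow_two_pos_of_ne_zero (sub_ne_zero.2 fun h => hpq ?_)
  exact mul_left_cancel₀ hlam (by linarith [Real.exp_injective h])

namespace FP3Feasible

variable {a t0 T x0 : ℝ} {x u : ℝ → ℝ}

theorem integrableOn_control (h : FP3Feasible a t0 T x0 x u) : IntegrableOn u (Icc t0 T) :=
  Integrable.mono' (integrable_const 1) h.1 (h.2.1.mono fun _ ht => abs_le.2 ht)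

theorem intervalIntegrable_control (h : FP3Feasible a t0 T x0 x u) {s t : ℝ}
    (hs : s ∈ Icc t0 T) (ht : t ∈ Icc t0 T) : IntervalIntegrable u volume s t :=
  (h.integrableOn_control.mono_set (uIcc_subset_Icc hs ht)).intervalIntegrable

theorem state_eq (h : FP3Feasible a t0 T x0 x u) {s t : ℝ} (hs : s ∈ Icc t0 T)
    (ht : t ∈ Icc t0 T) : x t = x s + ∫ r in s..t, -(a * u r) := by
  have hv : ∀ r ∈ Icc t0 T, IntervalIntegrable (fun r => -(a * u r)) volume t0 r :=
    fun r hr => ((h.intervalIntegrable_control ⟨le_rfl, hs.1.trans hs.2⟩ hr).const_mul a).neg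
  rw [h.2.2.1 t ht, h.2.2.1 s hs,
    ← intervalIntegral.integral_interval_sub_left (hv t ht) (hv s hs)]
  ring

theorem continuousOn_state (h : FP3Feasible a t0 T x0 x u) {s t : ℝ} (hs : s ∈ Icc t0 T)
    (ht : t ∈ Icc t0 T) : ContinuousOn x (uIcc s t) := by
  have hv : IntervalIntegrable (fun r => -(a * u r)) volume s t :=
    ((h.intervalIntegrable_control hs ht).const_mul a).neg
  refine (continuousOn_const.add (intervalIntegral.continuousOn_primitive_interval' hv
    left_mem_uIcc)).congr fun r hr => h.state_eq hs (uIcc_subset_Icc hs ht hr)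

theorem cost_eq (h : FP3Feasible a t0 T x0 x u) (ha : a ≠ 0) (lam : ℝ) {t1 t2 : ℝ}
    (h1 : t1 ∈ Icc t0 T) (h2 : t2 ∈ Icc t0 T) :
    FP3Cost lam t1 t2 x u = (lam / a - 1) * (∫ t in t1..t2, Real.exp (-(lam * t)) * x t)
      - (Real.exp (-(lam * t1)) * x t1 - Real.exp (-(lam * t2)) * x t2) / a := by
  have hg : ContDiff ℝ 1 fun t => Real.exp (-(lam * t)) := by fun_prop
  have hdg : ∀ t, deriv (fun t => Real.exp (-(lam * t))) t * x t
      = -(lam * (Real.exp (-(lam * t)) * x t)) := fun t => by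
    have hd : HasDerivAt (fun t => Real.exp (-(lam * t))) (Real.exp (-(lam * t)) * -(lam * 1)) t :=
      ((hasDerivAt_id' t).const_mul lam).neg.exp
    rw [hd.deriv]
    ring
  have hu := h.intervalIntegrable_control h1 h2
  have hv : IntervalIntegrable (fun t => -(a * u t)) volume t1 t2 := (hu.const_mul a).neg
  have hibp := integral_mul_eq_sub_integral_deriv_mul_of_eq_primitive hg hv
    fun t ht => h.state_eq h1 (uIcc_subset_Icc h1 h2 ht)
  have hgv : ∀ t, Real.exp (-(lam * t)) * -(a * u t) = -(a * (Real.exp (-(lam * t)) * u t)) :=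
    fun t => by ring
  simp only [hdg, hgv, intervalIntegral.integral_neg, intervalIntegral.integral_const_mul] at hibp
  have hgx : IntervalIntegrable (fun t => Real.exp (-(lam * t)) * x t) volume t1 t2 :=
    (ContinuousOn.mul (by fun_prop) (h.continuousOn_state h1 h2)).intervalIntegrable
  have hgu : IntervalIntegrable (fun t => Real.exp (-(lam * t)) * u t) volume t1 t2 :=
    hu.continuousOn_mul (by fun_prop)
  have hcost : FP3Cost lam t1 t2 x u = -(∫ t in t1..t2, Real.exp (-(lam * t)) * x t)
      - ∫ t in t1..t2, Real.exp (-(lam * t)) * u t := by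
    simp only [FP3Cost, intervalIntegral.integral_neg, mul_add]
    rw [intervalIntegral.integral_add hgx hgu]
    ring
  rw [hcost]
  field_simp
  linear_combination hibp

end FP3Feasible

theorem fp3_lemma_technical4_general
    (a lam t0 T x0 : ℝ) (hal : lam < a) (hlam : 0 < lam)
    (t1 t2 ξ : ℝ) (h01 : t0 ≤ t1) (h12 : t1 < t2) (h2T : t2 ≤ T)
    (xt ut xc uc : ℝ → ℝ)
    (hft : FP3Feasible a t0 T x0 xt ut) (hfc : FP3Feasible a t0 T x0 xc uc)
    (hxt : ∀ t ∈ Icc t1 t2, xt t = ξ)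
    (hxc1 : ∀ t ∈ Icc t1 ((t1 + t2) / 2), xc t = ξ - a * (t - t1))
    (hxc2 : ∀ t ∈ Ioc ((t1 + t2) / 2) t2, xc t = ξ + a * (t - t2)) :
    FP3Cost lam t1 t2 xc uc - FP3Cost lam t1 t2 xt ut
      = (1 / lam) * (a / lam - 1) * FP3Delta lam t1 t2 ∧
    FP3Cost lam t1 t2 xt ut < FP3Cost lam t1 t2 xc uc := by
  have ha : a ≠ 0 := (hlam.trans hal).ne'
  have h1 : t1 ∈ Icc t0 T := ⟨h01, h12.le.trans h2T⟩
  have h2 : t2 ∈ Icc t0 T := ⟨h01.trans h12.le, h2T⟩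
  have hxc : ∀ t ∈ uIcc t1 t2, Real.exp (-(lam * t)) * xc t
      = ξ * Real.exp (-(lam * t)) - a * (Real.exp (-(lam * t)) * min (t - t1) (t2 - t)) := by
    intro t ht
    rw [uIcc_of_le h12.le] at ht
    rcases le_or_gt t ((t1 + t2) / 2) with htm | htm
    · rw [hxc1 t ⟨ht.1, htm⟩, min_eq_left (by linarith)]; ring
    · rw [hxc2 t ⟨htm, ht.2⟩, min_eq_right (by linarith)]; ring
  have hxt' : ∀ t ∈ uIcc t1 t2, Real.exp (-(lam * t)) * xt t = ξ * Real.exp (-(lam * t)) :=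
    fun t ht => by rw [hxt t (uIcc_of_le h12.le ▸ ht), mul_comm]
  have hdiff : FP3Cost lam t1 t2 xc uc - FP3Cost lam t1 t2 xt ut
      = (1 / lam) * (a / lam - 1) * FP3Delta lam t1 t2 := by
    rw [hfc.cost_eq ha lam h1 h2, hft.cost_eq ha lam h1 h2, intervalIntegral.integral_congr hxc,
      intervalIntegral.integral_congr hxt',
      intervalIntegral.integral_sub (Continuous.intervalIntegrable (by fun_prop) _ _)
        (Continuous.intervalIntegrable (by fun_prop) _ _), intervalIntegral.integral_const_mul,
      intervalIntegral.integral_const_mul, integral_exp_mul_min_sub hlam.ne' h12.le,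
      hxc1 t1 ⟨le_rfl, by linarith⟩, hxc2 t2 ⟨by linarith, le_rfl⟩,
      hxt t1 ⟨le_rfl, h12.le⟩, hxt t2 ⟨h12.le, le_rfl⟩]
    field_simp
    ring
  refine ⟨hdiff, sub_pos.1 (hdiff ▸ ?_)⟩
  have hΔ := FP3Delta_pos hlam.ne' h12.ne
  have hal' : 0 < a / lam - 1 := by rw [sub_pos, one_lt_div hlam]; exact hal
  positivity

/-- Lemma 3.5: comparison of the restricted costs of a process
staying at the level `ξ > 0` and of the corresponding "valley" process on `[t1,t2]`. -/
theorem fp3_lemma_technical4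
    (a lam t0 T x0 : ℝ) (hal : lam < a) (hlam : 0 < lam)
    (ht0 : 0 ≤ t0) (htT : t0 < T) (hx0 : x0 ∈ Icc (-1 : ℝ) 1)
    (t1 t2 ξ : ℝ) (h01 : t0 ≤ t1) (h12 : t1 < t2) (h2T : t2 ≤ T) (hξ : 0 < ξ)
    (xt ut xc uc : ℝ → ℝ)
    (hft : FP3Feasible a t0 T x0 xt ut) (hfc : FP3Feasible a t0 T x0 xc uc)
    (hxt : ∀ t ∈ Icc t1 t2, xt t = ξ)
    (hxc1 : ∀ t ∈ Icc t1 ((t1 + t2) / 2), xc t = ξ - a * (t - t1))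
    (hxc2 : ∀ t ∈ Ioc ((t1 + t2) / 2) t2, xc t = ξ + a * (t - t2)) :
    FP3Cost lam t1 t2 xc uc - FP3Cost lam t1 t2 xt ut
      = (1 / lam) * (a / lam - 1) * FP3Delta lam t1 t2 ∧
    FP3Cost lam t1 t2 xt ut < FP3Cost lam t1 t2 xc uc :=
  fp3_lemma_technical4_general a lam t0 T x0 hal hlam t1 t2 ξ h01 h12 h2T xt ut xc uc hft hfc hxt
    hxc1 hxc2
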